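/- The median point predictor under absolute error loss equals Û* = √((1 - Med)·δ/(k·Med)), where Med is the median of the Beta(d,m) distribution; i.e., if U has density h(u) = (2/(B(d,m)·u))·p(u)^d·(1-p(u))^m with p(u) = δ/(δ+k·u²), then P(U ≤ Û*) = 1/2. -/

import Mathlib

/-!
The substitution `s = δ / (δ + k u²)` maps `[0, Û*]` decreasingly onto `[Med, 1]`, and since
`s (1 - s) = k δ u² / (δ + k u²)²`, it carries `h u du` to the Beta(d, m) density `ds`.
Hence `P(U ≤ Û*)` is the Beta(d, m) mass of `[Med, 1]`, which is `1/2`.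
-/

open Real Set MeasureTheory

lemma integral_pow_mul_one_sub_pow_eq_beta (d m : ℕ) (hd : 1 ≤ d) (hm : 1 ≤ m) :
    ∫ x in (0 : ℝ)..1, x ^ (d - 1) * (1 - x) ^ (m - 1) = ProbabilityTheory.beta d m := by
  have hcast : Complex.betaIntegral d m =
      ((∫ x in (0 : ℝ)..1, x ^ (d - 1) * (1 - x) ^ (m - 1) : ℝ) : ℂ) := by
    rw [Complex.betaIntegral, ← intervalIntegral.integral_ofReal]
    refine intervalIntegral.integral_congr fun x _ => ?_
    push_cast [← Nat.cast_pred hd, ← Nat.cast_pred hm, Complex.cpow_natCast]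
    rfl
  rw [ProbabilityTheory.beta_eq_betaIntegralReal _ _ (by positivity) (by positivity)]
  push_cast
  rw [hcast, Complex.ofReal_re]

lemma hasDerivAt_div_add_mul_sq {k δ : ℝ} (hk : 0 ≤ k) (hδ : 0 < δ) (u : ℝ) :
    HasDerivAt (fun u => δ / (δ + k * u ^ 2)) (-(2 * k * δ * u) / (δ + k * u ^ 2) ^ 2) u := by
  have hden : δ + k * u ^ 2 ≠ 0 := by positivity
  have hinner : HasDerivAt (fun u => δ + k * u ^ 2) (k * (2 * u)) u := by
    simpa using ((hasDerivAt_pow 2 u).const_mul k).const_add δ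
  exact ((hasDerivAt_const u δ).div hinner hden).congr_deriv (by ring)

lemma integral_comp_div_add_mul_sq {k δ : ℝ} (hk : 0 ≤ k) (hδ : 0 < δ) {g : ℝ → ℝ}
    (hg : Continuous g) (U : ℝ) :
    ∫ u in (0 : ℝ)..U, 2 * k * δ * u / (δ + k * u ^ 2) ^ 2 * g (δ / (δ + k * u ^ 2)) =
      ∫ s in δ / (δ + k * U ^ 2)..1, g s := by
  have hcont : Continuous fun u => -(2 * k * δ * u) / (δ + k * u ^ 2) ^ 2 :=
    .div (by fun_prop) (by fun_prop) fun u => by positivity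
  have hsubst := intervalIntegral.integral_deriv_smul_comp (a := 0) (b := U)
    (fun u _ => hasDerivAt_div_add_mul_sq hk hδ u) hcont.continuousOn hg
  have hat_zero : δ / (δ + k * 0 ^ 2) = 1 := by simp [hδ.ne']
  simp only [smul_eq_mul, Function.comp_def, neg_div, neg_mul, intervalIntegral.integral_neg,
    hat_zero] at hsubst
  rw [intervalIntegral.integral_symm 1, ← hsubst, neg_neg]

lemma two_div_mul_pow_mul_one_sub_pow {k δ : ℝ} (hk : 0 ≤ k) (hδ : 0 < δ) (B u : ℝ)
    {d m : ℕ} (hd : 1 ≤ d) (hm : 1 ≤ m) :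
    2 / (B * u) * (δ / (δ + k * u ^ 2)) ^ d * (1 - δ / (δ + k * u ^ 2)) ^ m =
      2 * k * δ * u / (δ + k * u ^ 2) ^ 2 *
        ((δ / (δ + k * u ^ 2)) ^ (d - 1) * (1 - δ / (δ + k * u ^ 2)) ^ (m - 1) / B) := by
  obtain ⟨a, rfl⟩ : ∃ a, d = a + 1 := ⟨d - 1, by omega⟩
  obtain ⟨b, rfl⟩ : ∃ b, m = b + 1 := ⟨m - 1, by omega⟩
  have hden : δ + k * u ^ 2 ≠ 0 := by positivity
  -- at `u = 0` or `B = 0` both sides vanish, the left one through `x / 0 = 0`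
  rcases eq_or_ne u 0 with rfl | hu
  · simp
  rcases eq_or_ne B 0 with rfl | hB
  · simp
  simp only [one_sub_div hden, add_sub_cancel_left, Nat.add_sub_cancel, div_pow]
  field_simp
  ring

lemma div_add_mul_sq_sqrt {k δ M : ℝ} (hk : 0 < k) (hδ : 0 < δ) (hM0 : 0 < M) (hM1 : M ≤ 1) :
    δ / (δ + k * √((1 - M) * δ / (k * M)) ^ 2) = M := by
  have : 0 ≤ 1 - M := by linarith
  rw [sq_sqrt (by positivity)]
  field_simp
  ring

theorem median_predictor (d m : ℕ) (hd : 1 ≤ d) (hm : 1 ≤ m)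
    (k δ : ℝ) (hk : 0 < k) (hδ : 0 < δ)
    (Med : ℝ) (hMed0 : 0 < Med) (hMed1 : Med < 1)
    (hMed : (∫ s in (0 : ℝ)..Med, s ^ (d - 1) * (1 - s) ^ (m - 1)) /
        (Real.Gamma d * Real.Gamma m / Real.Gamma (d + m)) = 1 / 2)
    (h : ℝ → ℝ)
    (hh : ∀ u, h u = 2 / ((Real.Gamma d * Real.Gamma m / Real.Gamma (d + m)) * u) *
      (δ / (δ + k * u^2)) ^ d * (1 - δ / (δ + k * u^2)) ^ m) :
    ∫ u in Set.Ioc (0 : ℝ) (Real.sqrt ((1 - Med) * δ / (k * Med))), h u = 1 / 2 := by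
  set B := Real.Gamma d * Real.Gamma m / Real.Gamma (d + m)
  have hB : ∫ s in (0 : ℝ)..1, s ^ (d - 1) * (1 - s) ^ (m - 1) = B :=
    integral_pow_mul_one_sub_pow_eq_beta d m hd hm
  have hB_ne : B ≠ 0 := (ProbabilityTheory.beta_pos (by positivity) (by positivity)).ne'
  have hint (a b : ℝ) : IntervalIntegrable (fun s => s ^ (d - 1) * (1 - s) ^ (m - 1)) volume a b :=
    (by fun_prop : Continuous _).intervalIntegrable a b
  rw [← intervalIntegral.integral_of_le (sqrt_nonneg _)]
  simp_rw [hh, two_div_mul_pow_mul_one_sub_pow hk.le hδ _ _ hd hm]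
  rw [integral_comp_div_add_mul_sq hk.le hδ (g := fun s => s ^ (d - 1) * (1 - s) ^ (m - 1) / B)
      (by fun_prop), div_add_mul_sq_sqrt hk hδ hMed0 hMed1.le, intervalIntegral.integral_div,
    ← intervalIntegral.integral_interval_sub_left (hint 0 1) (hint 0 Med), sub_div, hB,
    div_self hB_ne, hMed]
  norm_num
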